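/- (Theorem 2, starvation construction) Let p be a priority vector and suppose some link i has two distinct higher-priority neighbors j, k ∈ S_i^p that are not adjacent in G. Fix an integer m ≥ 1 and consider the queue dynamics with initial queues Q_j(0) = 1 and Q_l(0) = 0 for all l ≠ j, and arrival processes A_k(t) = ⌈t/2⌉, A_j(t) = ⌊t/2⌋, A_i(t) = ⌊t/m⌋, and A_l(t) = 0 for all other links l. Then under maximal scheduling with priority p, for every slot t ≥ 1 the schedule σ(t) contains j if t is odd and contains k if t is even, and D_i(t) = 0 for all t; consequently link i is not rate stable (its arrival rate is 1/m > 0 but its departure rate is 0), even though the arrival rate vector λ' given by λ'_i = 1/m, λ'_j = λ'_k = 1/2, and λ'_l = 0 otherwise lies in Λ_opt whenever m ≥ 2. -/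
import Mathlib


open Finset Filter Topology

variable {V : Type*}

/-- The set `S_i^p` of higher-priority neighbors of link `i` in the interference graph `G`,
under the priority map `p` (a smaller value means a higher priority). -/
def hpNbrs [Fintype V] [DecidableEq V] (G : SimpleGraph V) [DecidableRel G.Adj]
    (p : V → ℕ) (i : V) : Finset V :=
  (G.neighborFinset i).filter fun j => p j < p i

/-- The maximal schedule `σ(B,p)` with priority `p` on the backlogged set `B`:
`i ∈ σ(B,p)` iff `i ∈ B` and no higher-priority neighbor of `i` is in `σ(B,p)`. -/
def sched [Fintype V] [DecidableEq V] (G : SimpleGraph V) [DecidableRel G.Adj]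
    (p : V → ℕ) (B : Set V) (i : V) : Prop :=
  i ∈ B ∧ ∀ j, G.Adj i j → p j < p i → ¬ sched G p B j
termination_by p i

/-- The numerical priority values of a priority vector `p : V ≃ Fin N`
(the link `i` with `p i = 0` has the highest priority). -/
def pv [Fintype V] (p : V ≃ Fin (Fintype.card V)) : V → ℕ := fun i => (p i : ℕ)

attribute [local instance] Classical.propDecidable

/-- Cumulative departures `D_i(t)` of the queue dynamics under maximal scheduling with
priority `p`, cumulative arrival processes `A` and initial queue lengths `Q0`. -/
noncomputable def cumDep [Fintype V] [DecidableEq V] (G : SimpleGraph V) [DecidableRel G.Adj]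
    (p : V → ℕ) (A : V → ℕ → ℕ) (Q0 : V → ℕ) : ℕ → V → ℕ
  | 0, _ => 0
  | t + 1, i =>
      cumDep G p A Q0 t i +
        (if sched G p
            {j | 1 ≤ (Q0 j : ℤ) + (A j t : ℤ) - (cumDep G p A Q0 t j : ℤ)} i then 1 else 0)

/-- Queue length `Q_i(t) = Q_i(0) + A_i(t) - D_i(t)`. -/
noncomputable def queue [Fintype V] [DecidableEq V] (G : SimpleGraph V) [DecidableRel G.Adj]
    (p : V → ℕ) (A : V → ℕ → ℕ) (Q0 : V → ℕ) (t : ℕ) (i : V) : ℤ :=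
  (Q0 i : ℤ) + (A i t : ℤ) - (cumDep G p A Q0 t i : ℤ)

/-- The schedule `σ(t)` of slot `t ≥ 1`: the maximal schedule with priority `p` on the set
`B(t) = {j : Q_j(t-1) ≥ 1}` of backlogged links. -/
noncomputable def schedAt [Fintype V] [DecidableEq V] (G : SimpleGraph V) [DecidableRel G.Adj]
    (p : V → ℕ) (A : V → ℕ → ℕ) (Q0 : V → ℕ) (t : ℕ) (i : V) : Prop :=
  sched G p {j | 1 ≤ queue G p A Q0 (t - 1) j} i

/-- `s` is an independent set of `G`. -/
def indepIn (G : SimpleGraph V) (s : Finset V) : Prop :=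
  ∀ a ∈ s, ∀ b ∈ s, a ≠ b → ¬ G.Adj a b

/-- The optimal stability region `Λ_opt`: the convex hull of the 0/1 indicator vectors of
the independent sets of `G`. -/
def LambdaOpt [Fintype V] [DecidableEq V] (G : SimpleGraph V) : Set (V → ℝ) :=
  convexHull ℝ {x | ∃ s : Finset V, indepIn G s ∧ x = fun v => if v ∈ s then (1 : ℝ) else 0}


/-- Auxiliary: the backlogged set used in `cumDep`. -/
def Bset [Fintype V] [DecidableEq V] (G : SimpleGraph V) [DecidableRel G.Adj]
    (p : V → ℕ) (A : V → ℕ → ℕ) (Q0 : V → ℕ) (t : ℕ) : Set V :=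
  {x | 1 ≤ (Q0 x : ℤ) + (A x t : ℤ) - (cumDep G p A Q0 t x : ℤ)}

lemma cumDep_succ' [Fintype V] [DecidableEq V] (G : SimpleGraph V) [DecidableRel G.Adj]
    (p : V → ℕ) (A : V → ℕ → ℕ) (Q0 : V → ℕ) (t : ℕ) (i : V) :
    cumDep G p A Q0 (t + 1) i = cumDep G p A Q0 t i +
      (if sched G p (Bset G p A Q0 t) i then 1 else 0) := by
  rw [cumDep]; rfl

lemma cumDep_zero' [Fintype V] [DecidableEq V] (G : SimpleGraph V) [DecidableRel G.Adj]
    (p : V → ℕ) (A : V → ℕ → ℕ) (Q0 : V → ℕ) (i : V) :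
    cumDep G p A Q0 0 i = 0 := by
  rw [cumDep]

lemma sched_iff' [Fintype V] [DecidableEq V] (G : SimpleGraph V) [DecidableRel G.Adj]
    (p : V → ℕ) (B : Set V) (i : V) :
    sched G p B i ↔ i ∈ B ∧ ∀ j, G.Adj i j → p j < p i → ¬ sched G p B j := by
  rw [sched]

lemma schedAt_iff' [Fintype V] [DecidableEq V] (G : SimpleGraph V) [DecidableRel G.Adj]
    (p : V → ℕ) (A : V → ℕ → ℕ) (Q0 : V → ℕ) (t : ℕ) (i : V) :
    schedAt G p A Q0 t i ↔ sched G p (Bset G p A Q0 (t - 1)) i := Iff.rfl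

set_option maxHeartbeats 1600000 in
/-- Theorem 2, starvation construction: if some link `i` has two distinct,
non-adjacent higher-priority neighbors `j, k ∈ S_i^p`, then with initial queues
`Q_j(0) = 1`, `Q_l(0) = 0` otherwise, and arrivals `A_k(t) = ⌈t/2⌉`, `A_j(t) = ⌊t/2⌋`,
`A_i(t) = ⌊t/m⌋`, `A_l(t) = 0` otherwise, the maximal scheduler with priority `p`
schedules `j` in every odd slot and `k` in every even slot, `D_i(t) = 0` for all `t`,
link `i` is not rate stable, and yet the rate vector `λ'` (with `λ'_i = 1/m`,
`λ'_j = λ'_k = 1/2`, `λ'_l = 0` otherwise) lies in `Λ_opt` whenever `m ≥ 2`. -/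
theorem starvation_construction [Fintype V] [DecidableEq V] [Nonempty V]
    (G : SimpleGraph V) [DecidableRel G.Adj] (p : V ≃ Fin (Fintype.card V))
    (i j k : V) (hjk : j ≠ k)
    (hj : j ∈ hpNbrs G (pv p) i) (hk : k ∈ hpNbrs G (pv p) i) (hnadj : ¬ G.Adj j k)
    (m : ℕ) (hm : 1 ≤ m)
    (A : V → ℕ → ℕ)
    (hA : A = fun l t => if l = k then (t + 1) / 2 else if l = j then t / 2
      else if l = i then t / m else 0)
    (Q0 : V → ℕ) (hQ0 : Q0 = fun l => if l = j then 1 else 0) :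
    (∀ t, 1 ≤ t →
        (Odd t → schedAt G (pv p) A Q0 t j) ∧ (Even t → schedAt G (pv p) A Q0 t k)) ∧
    (∀ t, cumDep G (pv p) A Q0 t i = 0) ∧
    (¬ ∃ c : ℝ, Tendsto (fun t : ℕ => (A i t : ℝ) / (t : ℝ)) atTop (𝓝 c) ∧
        Tendsto (fun t : ℕ => (cumDep G (pv p) A Q0 t i : ℝ) / (t : ℝ)) atTop (𝓝 c)) ∧
    (2 ≤ m →
      (fun l => if l = k then (1 : ℝ) / 2 else if l = j then (1 : ℝ) / 2
        else if l = i then 1 / (m : ℝ) else 0) ∈ LambdaOpt G) := by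
  classical
  rw [hpNbrs, Finset.mem_filter, SimpleGraph.mem_neighborFinset] at hj hk
  obtain ⟨hij, hpj⟩ := hj
  obtain ⟨hik, hpk⟩ := hk
  have hji : i ≠ j := hij.ne
  have hki : i ≠ k := hik.ne
  have hAk : ∀ t, A k t = (t + 1) / 2 := by intro t; simp [hA]
  have hAj : ∀ t, A j t = t / 2 := by intro t; simp [hA, hjk]
  have hAi : ∀ t, A i t = t / m := by intro t; simp [hA, hji, hki]
  have hAl : ∀ l, l ≠ i → l ≠ j → l ≠ k → ∀ t, A l t = 0 := by
    intro l h1 h2 h3 t; simp [hA, h1, h2, h3]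
  have hQj : Q0 j = 1 := by simp [hQ0]
  have hQl : ∀ l, l ≠ j → Q0 l = 0 := by intro l h; simp [hQ0, h]
  -- schedule facts at time-index t of the backlogged set, given departure counts
  have sfacts : ∀ t, cumDep G (pv p) A Q0 t j = (t + 1) / 2 →
      cumDep G (pv p) A Q0 t k = t / 2 →
      (∀ l, l ≠ i → l ≠ j → l ≠ k → cumDep G (pv p) A Q0 t l = 0) →
      (t % 2 = 0 → sched G (pv p) (Bset G (pv p) A Q0 t) j) ∧
      (t % 2 = 1 → sched G (pv p) (Bset G (pv p) A Q0 t) k) ∧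
      (t % 2 = 1 → ¬ sched G (pv p) (Bset G (pv p) A Q0 t) j) ∧
      (t % 2 = 0 → ¬ sched G (pv p) (Bset G (pv p) A Q0 t) k) ∧
      (¬ sched G (pv p) (Bset G (pv p) A Q0 t) i) ∧
      (∀ l, l ≠ i → l ≠ j → l ≠ k → ¬ sched G (pv p) (Bset G (pv p) A Q0 t) l) := by
    intro t Dj Dk Dl
    have hmemj : j ∈ Bset G (pv p) A Q0 t ↔ t % 2 = 0 := by
      simp only [Bset, Set.mem_setOf_eq, Dj, hAj, hQj]
      omega
    have hmemk : k ∈ Bset G (pv p) A Q0 t ↔ t % 2 = 1 := by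
      simp only [Bset, Set.mem_setOf_eq, Dk, hAk, hQl k hjk.symm]
      omega
    have hmeml : ∀ l, l ≠ i → l ≠ j → l ≠ k → l ∉ Bset G (pv p) A Q0 t := by
      intro l h1 h2 h3
      simp only [Bset, Set.mem_setOf_eq, Dl l h1 h2 h3, hAl l h1 h2 h3, hQl l h2]
      omega
    have memBsub : ∀ x, x ∈ Bset G (pv p) A Q0 t → x = i ∨ x = j ∨ x = k := by
      intro x hx; by_contra h; push_neg at h
      exact hmeml x h.1 h.2.1 h.2.2 hx
    have schedmem : ∀ x, sched G (pv p) (Bset G (pv p) A Q0 t) x →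
        x ∈ Bset G (pv p) A Q0 t := by
      intro x hx; rw [sched_iff'] at hx; exact hx.1
    have hsj : t % 2 = 0 → sched G (pv p) (Bset G (pv p) A Q0 t) j := by
      intro ht; rw [sched_iff']
      refine ⟨hmemj.mpr ht, ?_⟩
      intro l hadj hlt hsl
      rcases memBsub l (schedmem l hsl) with rfl | rfl | rfl
      · exact absurd hlt (by omega)
      · exact G.irrefl hadj
      · exact hnadj hadj
    have hsk : t % 2 = 1 → sched G (pv p) (Bset G (pv p) A Q0 t) k := by
      intro ht; rw [sched_iff']
      refine ⟨hmemk.mpr ht, ?_⟩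
      intro l hadj hlt hsl
      rcases memBsub l (schedmem l hsl) with rfl | rfl | rfl
      · exact absurd hlt (by omega)
      · exact hnadj hadj.symm
      · exact G.irrefl hadj
    have hnsj : t % 2 = 1 → ¬ sched G (pv p) (Bset G (pv p) A Q0 t) j := by
      intro ht hs; have := hmemj.mp (schedmem j hs); omega
    have hnsk : t % 2 = 0 → ¬ sched G (pv p) (Bset G (pv p) A Q0 t) k := by
      intro ht hs; have := hmemk.mp (schedmem k hs); omega
    have hnsi : ¬ sched G (pv p) (Bset G (pv p) A Q0 t) i := by
      intro hs; rw [sched_iff'] at hs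
      rcases Nat.even_or_odd t with he | ho
      · exact hs.2 j hij hpj (hsj (Nat.even_iff.mp he))
      · exact hs.2 k hik hpk (hsk (Nat.odd_iff.mp ho))
    have hnsl : ∀ l, l ≠ i → l ≠ j → l ≠ k →
        ¬ sched G (pv p) (Bset G (pv p) A Q0 t) l := by
      intro l h1 h2 h3 hs; exact hmeml l h1 h2 h3 (schedmem l hs)
    exact ⟨hsj, hsk, hnsj, hnsk, hnsi, hnsl⟩
  have key : ∀ t, cumDep G (pv p) A Q0 t j = (t + 1) / 2 ∧
      cumDep G (pv p) A Q0 t k = t / 2 ∧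
      cumDep G (pv p) A Q0 t i = 0 ∧
      ∀ l, l ≠ i → l ≠ j → l ≠ k → cumDep G (pv p) A Q0 t l = 0 := by
    intro t
    induction t with
    | zero => exact ⟨by rw [cumDep_zero'], by rw [cumDep_zero'], by rw [cumDep_zero'],
        fun l _ _ _ => by rw [cumDep_zero']⟩
    | succ t ih =>
      obtain ⟨Dj, Dk, Di, Dl⟩ := ih
      obtain ⟨hsj, hsk, hnsj, hnsk, hnsi, hnsl⟩ := sfacts t Dj Dk Dl
      refine ⟨?_, ?_, ?_, ?_⟩
      · rw [cumDep_succ', Dj]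
        rcases Nat.even_or_odd t with he | ho
        · have ht := Nat.even_iff.mp he
          rw [if_pos (hsj ht)]; omega
        · have ht := Nat.odd_iff.mp ho
          rw [if_neg (hnsj ht)]; omega
      · rw [cumDep_succ', Dk]
        rcases Nat.even_or_odd t with he | ho
        · have ht := Nat.even_iff.mp he
          rw [if_neg (hnsk ht)]; omega
        · have ht := Nat.odd_iff.mp ho
          rw [if_pos (hsk ht)]; omega
      · rw [cumDep_succ', Di, if_neg hnsi]
      · intro l h1 h2 h3
        rw [cumDep_succ', Dl l h1 h2 h3, if_neg (hnsl l h1 h2 h3)]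
  refine ⟨?_, fun t => (key t).2.2.1, ?_, ?_⟩
  · -- part 1
    intro t ht
    obtain ⟨hsj, hsk, -, -, -, -⟩ :=
      sfacts (t - 1) (key (t - 1)).1 (key (t - 1)).2.1 (key (t - 1)).2.2.2
    constructor
    · intro hodd
      rw [Nat.odd_iff] at hodd
      rw [schedAt_iff']
      exact hsj (by omega)
    · intro heven
      rw [Nat.even_iff] at heven
      rw [schedAt_iff']
      exact hsk (by omega)
  · -- part 3: not rate stable
    rintro ⟨c, hc1, hc2⟩
    have h0 : Tendsto (fun t : ℕ => (cumDep G (pv p) A Q0 t i : ℝ) / (t : ℝ)) atTop (𝓝 0) := by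
      have heq : (fun t : ℕ => (cumDep G (pv p) A Q0 t i : ℝ) / (t : ℝ)) = fun _ => 0 := by
        funext t; rw [(key t).2.2.1]; simp
      rw [heq]; exact tendsto_const_nhds
    have hc0 : c = 0 := tendsto_nhds_unique hc2 h0
    subst hc0
    have hmt : Tendsto (fun t : ℕ => m * t) atTop atTop :=
      tendsto_atTop_mono (fun t => Nat.le_mul_of_pos_left t (by omega)) tendsto_id
    have h1 : Tendsto (fun t : ℕ => (A i (m * t) : ℝ) / ((m * t : ℕ) : ℝ)) atTop (𝓝 0) :=
      hc1.comp hmt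
    have h2 : Tendsto (fun t : ℕ => (A i (m * t) : ℝ) / ((m * t : ℕ) : ℝ)) atTop
        (𝓝 (1 / (m : ℝ))) := by
      have hev : (fun _ : ℕ => (1 : ℝ) / (m : ℝ)) =ᶠ[atTop]
          fun t : ℕ => (A i (m * t) : ℝ) / ((m * t : ℕ) : ℝ) := by
        filter_upwards [eventually_ge_atTop 1] with t ht
        rw [hAi, Nat.mul_div_cancel_left t (by omega)]
        have hm0 : (m : ℝ) ≠ 0 := Nat.cast_ne_zero.mpr (by omega)
        have ht0 : (t : ℝ) ≠ 0 := Nat.cast_ne_zero.mpr (by omega)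
        push_cast
        field_simp
      exact tendsto_const_nhds.congr' hev
    have hcontra := tendsto_nhds_unique h1 h2
    have hm0 : (m : ℝ) ≠ 0 := Nat.cast_ne_zero.mpr (by omega)
    exact (one_div_ne_zero hm0) hcontra.symm
  · -- part 4: the rate vector is in Λ_opt when m ≥ 2
    intro hm2
    have hjmem : (j : V) ∈ ({j, k} : Finset V) := by simp
    have hkmem : (k : V) ∈ ({j, k} : Finset V) := by simp
    have hindep : indepIn G ({j, k} : Finset V) := by
      intro a ha b hb hab
      simp only [Finset.mem_insert, Finset.mem_singleton] at ha hb
      rcases ha with rfl | rfl <;> rcases hb with rfl | rfl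
      · exact absurd rfl hab
      · exact hnadj
      · exact fun h => hnadj h.symm
      · exact absurd rfl hab
    have hx1 : (fun v => if v ∈ ({j, k} : Finset V) then (1 : ℝ) else 0) ∈ LambdaOpt G :=
      subset_convexHull ℝ _ ⟨{j, k}, hindep, rfl⟩
    have hx2 : (fun v => if v ∈ ({i} : Finset V) then (1 : ℝ) else 0) ∈ LambdaOpt G :=
      subset_convexHull ℝ _ ⟨{i}, by intro a ha b hb hab; simp_all, rfl⟩
    have hx3 : (fun v => if v ∈ (∅ : Finset V) then (1 : ℝ) else 0) ∈ LambdaOpt G :=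
      subset_convexHull ℝ _ ⟨∅, by intro a ha; simp_all, rfl⟩
    have hm0 : (0 : ℝ) < (m : ℝ) := by positivity
    have hle : (2 : ℝ) / (m : ℝ) ≤ 1 := by
      rw [div_le_one hm0]
      exact_mod_cast hm2
    have hy : ((2 : ℝ) / (m : ℝ)) • (fun v => if v ∈ ({i} : Finset V) then (1 : ℝ) else 0) +
        (1 - (2 : ℝ) / (m : ℝ)) • (fun v => if v ∈ (∅ : Finset V) then (1 : ℝ) else 0) ∈
        LambdaOpt G :=
      (convex_convexHull ℝ _) hx2 hx3 (by positivity) (by linarith) (by ring)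
    have hz : ((1 : ℝ) / 2) • (fun v => if v ∈ ({j, k} : Finset V) then (1 : ℝ) else 0) +
        ((1 : ℝ) / 2) • (((2 : ℝ) / (m : ℝ)) •
            (fun v => if v ∈ ({i} : Finset V) then (1 : ℝ) else 0) +
          (1 - (2 : ℝ) / (m : ℝ)) •
            (fun v => if v ∈ (∅ : Finset V) then (1 : ℝ) else 0)) ∈ LambdaOpt G :=
      (convex_convexHull ℝ _) hx1 hy (by norm_num) (by norm_num) (by norm_num)
    have hgoal : (fun l => if l = k then (1 : ℝ) / 2 else if l = j then (1 : ℝ) / 2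
        else if l = i then 1 / (m : ℝ) else 0) =
        ((1 : ℝ) / 2) • (fun v => if v ∈ ({j, k} : Finset V) then (1 : ℝ) else 0) +
        ((1 : ℝ) / 2) • (((2 : ℝ) / (m : ℝ)) •
            (fun v => if v ∈ ({i} : Finset V) then (1 : ℝ) else 0) +
          (1 - (2 : ℝ) / (m : ℝ)) •
            (fun v => if v ∈ (∅ : Finset V) then (1 : ℝ) else 0)) := by
      funext l
      simp only [Pi.add_apply, Pi.smul_apply, smul_eq_mul, Finset.mem_insert,
        Finset.mem_singleton, Finset.notMem_empty]
      by_cases hlk : l = k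
      · subst hlk
        simp [Ne.symm hki]
      · by_cases hlj : l = j
        · subst hlj
          simp [hjk, Ne.symm hji]
        · by_cases hli : l = i
          · have h1 : ¬ (i = j ∨ i = k) := fun h => h.elim hji hki
            rw [hli]
            simp [hki, hji, h1]
            ring
          · simp [hlk, hlj, hli]
    rw [hgoal]
    exact hz
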